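/- Let f be an automorphism of the free group F_n that induces the identity on the abelianization F_n^{ab}. If x, y ∈ F_n satisfy x⁻¹y ∈ [F_n, F_n], then f(x)·x⁻¹ and f(y)·y⁻¹ represent the same coset of D = [F_n, [F_n, F_n]]; equivalently, for every c ∈ [F_n, F_n], the element f(c)·c⁻¹ lies in [F_n, [F_n, F_n]]. (Hence the induced map H_1(F_n) → [F_n,F_n]/[F_n,[F_n,F_n]] is well defined.) -/

import Mathlib

/-!
An endomorphism `f` acting trivially on `G^{ab}` moves every `x` by `δ x = f(x) x⁻¹ ∈ [G, G]`.
Since `f(xy)(xy)⁻¹ = δ x · x δ(y) x⁻¹` and `[G, G]` is central modulo `D = [G, [G, G]]`,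
`δ` becomes a homomorphism `G → G/D` whose image lies in the abelian group `[G, G]/D`.
So it kills `[G, G]`, and its fibres are unions of cosets of `[G, G]`.
-/

abbrev FG (n : ℕ) := FreeGroup (Fin n)

/-- `D = [F_n, [F_n, F_n]]`, the subgroup generated by commutators of elements of `F_n`
with elements of the commutator subgroup. -/
def DD (n : ℕ) : Subgroup (FG n) := ⁅(⊤ : Subgroup (FG n)), commutator (FG n)⁆

section Displacement

open scoped commutatorElement

variable {G : Type*} [Group G] (H : Subgroup G) [H.Normal]

theorem QuotientGroup.mk_mem_center_of_mem {a : G} (ha : a ∈ H) :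
    (a : G ⧸ ⁅(⊤ : Subgroup G), H⁆) ∈ Subgroup.center (G ⧸ ⁅(⊤ : Subgroup G), H⁆) := by
  refine Subgroup.mem_center_iff.2 fun g ↦ QuotientGroup.induction_on g fun g ↦ ?_
  rw [← QuotientGroup.mk_mul, ← QuotientGroup.mk_mul, eq_comm, QuotientGroup.eq]
  have h : (a * g)⁻¹ * (g * a) = ⁅g⁻¹, a⁻¹⁆ := by rw [commutatorElement_def]; group
  rw [h]
  exact Subgroup.commutator_mem_commutator (Subgroup.mem_top _) (inv_mem ha)

def displacementHom (f : G →* G) (hf : ∀ x, f x * x⁻¹ ∈ H) : G →* G ⧸ ⁅(⊤ : Subgroup G), H⁆ :=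
  MonoidHom.mk' (fun x ↦ ((f x * x⁻¹ : G) : G ⧸ ⁅(⊤ : Subgroup G), H⁆)) fun x y ↦ by
    have hy := QuotientGroup.mk_mem_center_of_mem H (hf y)
    calc ((f (x * y) * (x * y)⁻¹ : G) : G ⧸ ⁅(⊤ : Subgroup G), H⁆)
        = (f x : G ⧸ ⁅(⊤ : Subgroup G), H⁆) * ((f y * y⁻¹ : G) : G ⧸ _) *
            ((x⁻¹ : G) : G ⧸ _) := by
          simp only [map_mul, mul_inv_rev, QuotientGroup.mk_mul, mul_assoc]
      _ = ((f x * x⁻¹ : G) : G ⧸ _) * ((f y * y⁻¹ : G) : G ⧸ _) := by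
          rw [mul_assoc, ← Subgroup.mem_center_iff.1 hy, ← mul_assoc, ← QuotientGroup.mk_mul]

variable {H}

theorem commutator_le_ker_displacementHom (f : G →* G) (hf : ∀ x, f x * x⁻¹ ∈ H) :
    commutator G ≤ (displacementHom H f hf).ker := by
  rw [commutator_def, Subgroup.commutator_le]
  intro a _ b _
  rw [MonoidHom.mem_ker, map_commutatorElement, commutatorElement_eq_one_iff_commute]
  exact Subgroup.mem_center_iff.1 (QuotientGroup.mk_mem_center_of_mem H (hf a)) _ |>.symm

theorem map_mul_inv_mem_top_commutator_of_mem_commutator (f : G →* G) (hf : ∀ x, f x * x⁻¹ ∈ H)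
    {c : G} (hc : c ∈ commutator G) : f c * c⁻¹ ∈ ⁅(⊤ : Subgroup G), H⁆ :=
  (QuotientGroup.eq_one_iff _).1 (commutator_le_ker_displacementHom f hf hc)

theorem displacement_div_mem_top_commutator (f : G →* G) (hf : ∀ x, f x * x⁻¹ ∈ H)
    {x y : G} (hxy : x⁻¹ * y ∈ commutator G) :
    (f x * x⁻¹) * (f y * y⁻¹)⁻¹ ∈ ⁅(⊤ : Subgroup G), H⁆ := by
  have h : displacementHom H f hf x = displacementHom H f hf y := by
    rw [← inv_mul_eq_one, ← map_inv, ← map_mul]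
    exact commutator_le_ker_displacementHom f hf hxy
  rw [← div_eq_mul_inv, ← QuotientGroup.eq_iff_div_mem]
  exact h

end Displacement

theorem Abelianization.mul_inv_mem_commutator_of_of_eq {G : Type*} [Group G] {x y : G}
    (h : Abelianization.of x = Abelianization.of y) : x * y⁻¹ ∈ commutator G := by
  rw [← Abelianization.ker_of, MonoidHom.mem_ker, map_mul, map_inv, h, mul_inv_cancel]

/-- Let `f` be an automorphism of the free group `F_n` inducing the identity on the
abelianization. If `x⁻¹y ∈ [F_n, F_n]`, then `f(x)·x⁻¹` and `f(y)·y⁻¹` represent the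
same coset of `D = [F_n, [F_n, F_n]]`; equivalently, `f(c)·c⁻¹ ∈ D` for every
`c ∈ [F_n, F_n]`. Hence the induced map `H₁(F_n) → [F_n,F_n]/D` is well defined. -/
theorem johnson_hom_factors (n : ℕ) (f : MulAut (FG n))
    (hf : ∀ x : FG n, Abelianization.of (f x) = Abelianization.of x) :
    (∀ x y : FG n, x⁻¹ * y ∈ commutator (FG n) →
        (f x * x⁻¹) * (f y * y⁻¹)⁻¹ ∈ DD n) ∧
    (∀ c ∈ commutator (FG n), f c * c⁻¹ ∈ DD n) := by
  have hδ : ∀ x, f.toMonoidHom x * x⁻¹ ∈ commutator (FG n) := fun x ↦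
    Abelianization.mul_inv_mem_commutator_of_of_eq (hf x)
  exact ⟨fun x y ↦ displacement_div_mem_top_commutator f.toMonoidHom hδ,
    fun c ↦ map_mul_inv_mem_top_commutator_of_mem_commutator f.toMonoidHom hδ⟩
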